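/- Let (gᵗ) be generated by the greedy Sinkhorn iteration. If iterate t satisfies D_KL(μᵢ ‖ Σ_{A∈S_K^L(i)} Pᵢ#π_A(gᵗ)) ≤ ‖μᵢ‖₁ for every i ∈ {1,…,K}, then 𝒢^L(gᵗ) − 𝒢^L(g^{t+1}) ≥ (1/7)(E_t/K)². If iterate t fails this condition for some i, then 𝒢^L(gᵗ) − 𝒢^L(g^{t+1}) ≥ min_{1≤j≤K} ‖μⱼ‖₁. -/

import Mathlib

open scoped ENNReal BigOperators

noncomputable section

/-- `S_K^L`: the nonempty subsets of `{1,…,K}` of size at most `L`. -/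
def SKL (K L : ℕ) : Finset (Finset (Fin K)) :=
  Finset.univ.filter fun A => A.Nonempty ∧ A.card ≤ L

/-- `S_K^L(i)`: the members of `S_K^L` containing `i`. -/
def SKLi (K L : ℕ) (i : Fin K) : Finset (Finset (Fin K)) :=
  (SKL K L).filter fun A => i ∈ A

variable {K : ℕ} (𝒳 : Fin K → Type*) [∀ i, Fintype (𝒳 i)] [∀ i, DecidableEq (𝒳 i)]

/-- The `i`-th marginal `Pᵢ#π_A` of a coupling `π_A` on `𝒳^A`
(zero when `i ∉ A`). -/
def marg (A : Finset (Fin K)) (π : ((j : A) → 𝒳 j.1) → ℝ) (i : Fin K) (xi : 𝒳 i) : ℝ :=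
  if hi : i ∈ A then
    ∑ x : (j : A) → 𝒳 j.1, (if x ⟨i, hi⟩ = xi then π x else 0)
  else 0

/-- `Σ_{A ∈ S_K^L(i)} Pᵢ#π_A`, evaluated at `xi`. -/
def totMarg (L : ℕ) (π : (A : Finset (Fin K)) → ((j : A) → 𝒳 j.1) → ℝ)
    (i : Fin K) (xi : 𝒳 i) : ℝ :=
  ∑ A ∈ SKLi K L i, marg 𝒳 A (π A) i xi

/-- The couplings `π_A(g)` induced by potentials `g`, interpreted as `0` where the
cost is `+∞`. -/
def piInd (η : ℝ) (c : (A : Finset (Fin K)) → ((j : A) → 𝒳 j.1) → ℝ≥0∞)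
    (g : (i : Fin K) → 𝒳 i → ℝ) (A : Finset (Fin K)) (x : (j : A) → 𝒳 j.1) : ℝ :=
  if c A x = ⊤ then 0
  else Real.exp ((∑ j : A, g j.1 (x j) - (1 + (c A x).toReal)) / η)

/-- The dual objective `𝒢^L`. -/
def dualObj (η : ℝ) (L : ℕ) (c : (A : Finset (Fin K)) → ((j : A) → 𝒳 j.1) → ℝ≥0∞)
    (μ : (i : Fin K) → 𝒳 i → ℝ) (g : (i : Fin K) → 𝒳 i → ℝ) : ℝ :=
  (∑ A ∈ SKL K L, ∑ x : (j : A) → 𝒳 j.1, piInd 𝒳 η c g A x)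
    - (1 / η) * ∑ i : Fin K, ∑ xi : 𝒳 i, g i xi * μ i xi

/-- Unnormalized Kullback–Leibler divergence (convention `0 · log 0 = 0`). -/
def KLdiv {Z : Type*} [Fintype Z] (α β : Z → ℝ) : ℝ :=
  (∑ z, (β z - α z)) + ∑ z, α z * Real.log (α z / β z)

/-- ℓ¹ norm of a vector on a finite set. -/
def l1 {Z : Type*} [Fintype Z] (v : Z → ℝ) : ℝ := ∑ z, |v z|

/-- `g : ℕ → potentials` is generated by the greedy Sinkhorn iteration: `g⁰ = 0`,
and at each step a coordinate `I` maximizing the KL-discrepancy of the `I`-th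
marginal is updated by the Sinkhorn formula, all others kept fixed. -/
def IsGreedySinkhorn (η : ℝ) (L : ℕ)
    (c : (A : Finset (Fin K)) → ((j : A) → 𝒳 j.1) → ℝ≥0∞)
    (μ : (i : Fin K) → 𝒳 i → ℝ) (g : ℕ → (i : Fin K) → 𝒳 i → ℝ) : Prop :=
  (∀ i xi, g 0 i xi = 0) ∧
  ∀ t : ℕ, ∃ I : Fin K,
    (∀ i : Fin K,
      KLdiv (μ i) (totMarg 𝒳 L (piInd 𝒳 η c (g t)) i) ≤
        KLdiv (μ I) (totMarg 𝒳 L (piInd 𝒳 η c (g t)) I)) ∧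
    (∀ xI : 𝒳 I, g (t + 1) I xI =
      g t I xI + η * Real.log (μ I xI)
        - η * Real.log (totMarg 𝒳 L (piInd 𝒳 η c (g t)) I xI)) ∧
    (∀ i : Fin K, i ≠ I → g (t + 1) i = g t i)

/-- The marginal error `E_t` of the greedy Sinkhorn iteration. -/
def Err (η : ℝ) (L : ℕ) (c : (A : Finset (Fin K)) → ((j : A) → 𝒳 j.1) → ℝ≥0∞)
    (μ : (i : Fin K) → 𝒳 i → ℝ) (g : ℕ → (i : Fin K) → 𝒳 i → ℝ) (t : ℕ) : ℝ :=
  ∑ i : Fin K,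
    l1 (fun xi : 𝒳 i => μ i xi - totMarg 𝒳 L (piInd 𝒳 η c (g t)) i xi)

/-- `C* := maxᵢ nᵢ / n`. -/
def Cstar (n : ℝ) : ℝ := ((Finset.univ.sup fun i : Fin K => Fintype.card (𝒳 i) : ℕ) : ℝ) / n

/-- `min_{j, y} μ_j(y)`. -/
def muMin (μ : (i : Fin K) → 𝒳 i → ℝ) : ℝ :=
  sInf {v : ℝ | ∃ (j : Fin K) (y : 𝒳 j), v = μ j y}

/-- `R̄ := L − η log min_{j,y} μ_j(y) + η L log(K C* n)`. -/
def Rbar (η : ℝ) (L : ℕ) (n : ℝ) (μ : (i : Fin K) → 𝒳 i → ℝ) : ℝ :=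
  (L : ℝ) - η * Real.log (muMin 𝒳 μ) + η * L * Real.log (K * Cstar 𝒳 n * n)

/-! A greedy Sinkhorn step on coordinate `I` multiplies every coupling `π_A` with `I ∈ A` by
`μ_I / m_I` (where `m_I` is the current total `I`-marginal), so it lowers the dual objective by
exactly `KL(μ_I ‖ m_I)`, the largest of the `K` divergences. When all divergences are at most
`‖μᵢ‖₁ ≤ 1`, a Pinsker-type inequality bounds each marginal error by `√(7 KL(μ_I ‖ m_I))`;
otherwise the decrease already exceeds the violating `‖μᵢ‖₁`. -/

open Finset

section Calculus

open Real Set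

theorem le_of_hasDerivAt_of_deriv_sign {f f' : ℝ → ℝ} {a c x : ℝ} (hac : a < c) (hx : a < x)
    (hf : ∀ y, a < y → HasDerivAt f (f' y) y)
    (hleft : ∀ y ∈ Ioo a c, f' y ≤ 0) (hright : ∀ y, c < y → 0 ≤ f' y) : f c ≤ f x := by
  rcases le_or_gt c x with hcx | hxc
  · refine monotoneOn_of_deriv_nonneg (convex_Ici c)
      (fun y hy => (hf y (hac.trans_le hy)).continuousAt.continuousWithinAt) ?_ ?_
      self_mem_Ici hcx hcx
    · rw [interior_Ici]
      exact fun y hy => (hf y (hac.trans hy)).differentiableAt.differentiableWithinAt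
    · rw [interior_Ici]
      exact fun y hy => (hf y (hac.trans hy)).deriv ▸ hright y hy
  · refine antitoneOn_of_deriv_nonpos (convex_Icc x c)
      (fun y hy => (hf y (hx.trans_le hy.1)).continuousAt.continuousWithinAt) ?_ ?_
      (left_mem_Icc.2 hxc.le) (right_mem_Icc.2 hxc.le) hxc.le
    · rw [interior_Icc]
      exact fun y hy => (hf y (hx.trans hy.1)).differentiableAt.differentiableWithinAt
    · rw [interior_Icc]
      exact fun y hy => (hf y (hx.trans hy.1)).deriv ▸ hleft y ⟨hx.trans hy.1, hy.2⟩

/-- `P t := 2 (t + 2) (t log t + 1 - t) - 3 (t - 1)²` has `P 1 = P' 1 = 0` and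
`P'' t = 4 (log t + 1/t - 1) ≥ 0`. -/
theorem three_mul_sq_sub_one_le {t : ℝ} (ht : 0 < t) :
    3 * (t - 1) ^ 2 ≤ 2 * (t + 2) * (t * log t + 1 - t) := by
  set Q : ℝ → ℝ := fun s => 4 * (s + 1) * log s - 8 * (s - 1)
  have hQ : ∀ s, 0 < s → HasDerivAt Q (4 * log s + 4 * (s + 1) * s⁻¹ - 8) s := by
    intro s hs
    refine ((((hasDerivAt_id s).add_const 1).const_mul 4).mul (hasDerivAt_log hs.ne')).sub
      (((hasDerivAt_id s).sub_const 1).const_mul 8) |>.congr_deriv ?_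
    simp only [id]; ring
  have hQ_mono : MonotoneOn Q (Ioi 0) := by
    refine monotoneOn_of_deriv_nonneg (convex_Ioi 0)
      (fun s hs => (hQ s hs).continuousAt.continuousWithinAt) ?_ ?_
    · rw [interior_Ioi]
      exact fun s hs => (hQ s hs).differentiableAt.differentiableWithinAt
    · rw [interior_Ioi]
      intro s (hs : 0 < s)
      rw [(hQ s hs).deriv]
      have hlog := one_sub_inv_le_log_of_pos hs
      have : (s + 1) * s⁻¹ = 1 + s⁻¹ := by field_simp
      linarith
  have hQ1 : Q 1 = 0 := by simp [Q]
  set P : ℝ → ℝ := fun s => 2 * (s + 2) * (s * log s + 1 - s) - 3 * (s - 1) ^ 2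
  have hP : ∀ s, 0 < s → HasDerivAt P (Q s) s := by
    intro s hs
    refine (((hasDerivAt_id s).add_const 2).const_mul 2).mul
      ((((hasDerivAt_id s).mul (hasDerivAt_log hs.ne')).add_const 1).sub (hasDerivAt_id s)) |>.sub
      ((((hasDerivAt_id s).sub_const 1).pow 2).const_mul 3) |>.congr_deriv ?_
    simp only [Q, id, Pi.mul_apply, Pi.sub_apply]
    field_simp
    ring
  have hP1 := le_of_hasDerivAt_of_deriv_sign one_pos ht hP
    (fun s hs => hQ1 ▸ hQ_mono hs.1 (mem_Ioi.2 one_pos) hs.2.le)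
    (fun s hs => hQ1 ▸ hQ_mono (mem_Ioi.2 one_pos) (one_pos.trans hs) hs.le)
  norm_num [P] at hP1
  linarith

theorem three_mul_sq_sub_le {a b : ℝ} (ha : 0 < a) (hb : 0 < b) :
    3 * (a - b) ^ 2 ≤ (2 * a + 4 * b) * (b - a + a * log (a / b)) := by
  have key := mul_le_mul_of_nonneg_left (three_mul_sq_sub_one_le (div_pos ha hb)) (sq_nonneg b)
  calc 3 * (a - b) ^ 2 = b ^ 2 * (3 * (a / b - 1) ^ 2) := by field_simp
    _ ≤ _ := key
    _ = _ := by field_simp; ring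

theorem sub_add_mul_log_div_nonneg {a b : ℝ} (ha : 0 < a) (hb : 0 < b) :
    0 ≤ b - a + a * log (a / b) := by
  have hlog := one_sub_inv_le_log_of_pos (div_pos ha hb)
  rw [inv_div] at hlog
  have : a * (1 - b / a) = a - b := by field_simp
  nlinarith

end Calculus

section KullbackLeibler

variable {Z : Type*} [Fintype Z] {α β : Z → ℝ}

theorem l1_eq_sum_of_pos {v : Z → ℝ} (hv : ∀ z, 0 < v z) : l1 v = ∑ z, v z :=
  sum_congr rfl fun z _ => abs_of_pos (hv z)

theorem KLdiv_eq_sum (α β : Z → ℝ) :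
    KLdiv α β = ∑ z, (β z - α z + α z * Real.log (α z / β z)) := by
  rw [KLdiv, sum_add_distrib]

theorem KLdiv_nonneg (hα : ∀ z, 0 < α z) (hβ : ∀ z, 0 < β z) : 0 ≤ KLdiv α β := by
  rw [KLdiv_eq_sum]
  exact sum_nonneg fun z _ => sub_add_mul_log_div_nonneg (hα z) (hβ z)

/-- A Pinsker-type inequality for unnormalized measures. The weighted Cauchy–Schwarz
inequality with weights `2α + 4β` reduces it to the pointwise `three_mul_sq_sub_le`; the mass
defect `|∑ α - ∑ β| ≤ ‖α - β‖₁` and `KLdiv α β ≤ ∑ α` then absorb the `4 ∑ β` term. -/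
theorem sq_l1_sub_le_of_KLdiv_le (hα : ∀ z, 0 < α z) (hβ : ∀ z, 0 < β z)
    (hD : KLdiv α β ≤ ∑ z, α z) :
    l1 (fun z => α z - β z) ^ 2 ≤ 7 * (∑ z, α z) * KLdiv α β := by
  have hCS : l1 (fun z => α z - β z) ^ 2 ≤ (∑ z, (2 * α z + 4 * β z)) * (KLdiv α β / 3) := by
    rw [KLdiv_eq_sum, sum_div]
    refine sum_sq_le_sum_mul_sum_of_sq_le_mul _ (fun z _ => by linarith [hα z, hβ z])
      (fun z _ => div_nonneg (sub_add_mul_log_div_nonneg (hα z) (hβ z)) zero_le_three)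
      (fun z _ => ?_)
    rw [sq_abs]
    linarith [three_mul_sq_sub_le (hα z) (hβ z)]
  rw [sum_add_distrib, ← mul_sum, ← mul_sum] at hCS
  have hb : ∑ z, β z ≤ ∑ z, α z + l1 (fun z => α z - β z) := by
    have hmass : |∑ z, α z - ∑ z, β z| ≤ l1 (fun z => α z - β z) := by
      rw [← sum_sub_distrib]
      exact abs_sum_le_sum_abs _ _
    linarith [neg_abs_le (∑ z, α z - ∑ z, β z)]
  have hKL := KLdiv_nonneg hα hβ
  nlinarith [sq_nonneg (l1 (fun z => α z - β z) - 2 * KLdiv α β),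
    mul_le_mul_of_nonneg_left hD hKL, mul_le_mul_of_nonneg_right hb hKL]

end KullbackLeibler

theorem sq_sum_div_card_le {ι : Type*} [Fintype ι] {f : ι → ℝ} {c : ℝ} (hc : 0 ≤ c)
    (hf : ∀ i, f i ^ 2 ≤ c) : ((∑ i, f i) / Fintype.card ι) ^ 2 ≤ c := by
  rcases (Fintype.card ι).eq_zero_or_pos with h | h
  · simpa [h] using hc
  have hcard : (0 : ℝ) < Fintype.card ι := by exact_mod_cast h
  rw [div_pow, div_le_iff₀ (by positivity)]
  calc (∑ i, f i) ^ 2 ≤ Fintype.card ι * ∑ i, f i ^ 2 := by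
        simpa using sq_sum_le_card_mul_sum_sq (s := univ) (f := f)
    _ ≤ Fintype.card ι * (Fintype.card ι * c) := by
        gcongr
        simpa using sum_le_sum fun i (_ : i ∈ univ) => hf i
    _ = c * Fintype.card ι ^ 2 := by ring

theorem piInd_nonneg {K : ℕ} {𝒳 : Fin K → Type*} (η : ℝ)
    (c : (A : Finset (Fin K)) → ((j : A) → 𝒳 j.1) → ℝ≥0∞)
    (g : (i : Fin K) → 𝒳 i → ℝ) (A : Finset (Fin K)) (x : (j : A) → 𝒳 j.1) :
    0 ≤ piInd 𝒳 η c g A x := by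
  unfold piInd
  split_ifs
  exacts [le_rfl, (Real.exp_pos _).le]

theorem piInd_pos {K : ℕ} {𝒳 : Fin K → Type*} (η : ℝ)
    {c : (A : Finset (Fin K)) → ((j : A) → 𝒳 j.1) → ℝ≥0∞}
    (g : (i : Fin K) → 𝒳 i → ℝ) {A : Finset (Fin K)} {x : (j : A) → 𝒳 j.1} (hx : c A x ≠ ⊤) :
    0 < piInd 𝒳 η c g A x := by
  rw [piInd, if_neg hx]
  exact Real.exp_pos _

section Marginals

variable {𝒳}

theorem marg_nonneg {A : Finset (Fin K)} {p : ((j : A) → 𝒳 j.1) → ℝ} (hp : ∀ x, 0 ≤ p x)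
    (i : Fin K) (xi : 𝒳 i) : 0 ≤ marg 𝒳 A p i xi := by
  unfold marg
  split_ifs
  exacts [sum_nonneg fun x _ => by split_ifs; exacts [hp x, le_rfl], le_rfl]

theorem le_marg {A : Finset (Fin K)} {p : ((j : A) → 𝒳 j.1) → ℝ} (hp : ∀ x, 0 ≤ p x)
    {i : Fin K} (hi : i ∈ A) (x : (j : A) → 𝒳 j.1) : p x ≤ marg 𝒳 A p i (x ⟨i, hi⟩) := by
  rw [marg, dif_pos hi]
  refine le_trans (le_of_eq (if_pos rfl).symm) (single_le_sum (f := fun y : (j : A) → 𝒳 j.1 =>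
    if y ⟨i, hi⟩ = x ⟨i, hi⟩ then p y else 0) (fun y _ => ?_) (mem_univ x))
  split_ifs
  exacts [hp y, le_rfl]

theorem sum_marg_mul {A : Finset (Fin K)} (p : ((j : A) → 𝒳 j.1) → ℝ) {i : Fin K} (hi : i ∈ A)
    (f : 𝒳 i → ℝ) :
    ∑ xi, marg 𝒳 A p i xi * f xi = ∑ x, p x * f (x ⟨i, hi⟩) := by
  simp only [marg, dif_pos hi, sum_mul, ite_mul, zero_mul]
  rw [sum_comm]
  exact sum_congr rfl fun x _ => by rw [sum_ite_eq]; simp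

theorem singleton_mem_SKLi {L : ℕ} (hL : 1 ≤ L) (i : Fin K) : {i} ∈ SKLi K L i := by
  simp [SKLi, SKL, hL]

theorem totMarg_eq_sum_SKL (L : ℕ) (p : (A : Finset (Fin K)) → ((j : A) → 𝒳 j.1) → ℝ)
    (i : Fin K) (xi : 𝒳 i) :
    totMarg 𝒳 L p i xi = ∑ A ∈ SKL K L, marg 𝒳 A (p A) i xi :=
  sum_filter_of_ne fun A _ h => by
    by_contra hi
    exact h (by rw [marg, dif_neg hi])

theorem totMarg_pos {L : ℕ} (hL : 1 ≤ L) (η : ℝ)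
    {c : (A : Finset (Fin K)) → ((j : A) → 𝒳 j.1) → ℝ≥0∞}
    (hc : ∀ (i : Fin K) (x : (j : ({i} : Finset (Fin K))) → 𝒳 j.1), c {i} x = 0)
    (g : (i : Fin K) → 𝒳 i → ℝ) (i : Fin K) (xi : 𝒳 i) :
    0 < totMarg 𝒳 L (piInd 𝒳 η c g) i xi := by
  let x : (j : ({i} : Finset (Fin K))) → 𝒳 j.1 :=
    fun j => cast (congrArg 𝒳 (mem_singleton.mp j.2).symm) xi
  calc 0 < piInd 𝒳 η c g {i} x := piInd_pos η g (by rw [hc]; exact ENNReal.zero_ne_top)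
    _ ≤ marg 𝒳 {i} (piInd 𝒳 η c g {i}) i xi :=
      le_marg (piInd_nonneg η c g {i}) (mem_singleton_self i) x
    _ ≤ totMarg 𝒳 L (piInd 𝒳 η c g) i xi :=
      single_le_sum (fun A _ => marg_nonneg (piInd_nonneg η c g A) i xi)
        (singleton_mem_SKLi hL i)

end Marginals

theorem piInd_update_of_mem {K : ℕ} {𝒳 : Fin K → Type*} {η : ℝ} (hη : η ≠ 0)
    (c : (A : Finset (Fin K)) → ((j : A) → 𝒳 j.1) → ℝ≥0∞) {g g' : (i : Fin K) → 𝒳 i → ℝ}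
    {I : Fin K} {δ : 𝒳 I → ℝ} (hupd : ∀ xI, g' I xI = g I xI + η * δ xI)
    (hfix : ∀ i, i ≠ I → g' i = g i) {A : Finset (Fin K)} (hA : I ∈ A) (x : (j : A) → 𝒳 j.1) :
    piInd 𝒳 η c g' A x = piInd 𝒳 η c g A x * Real.exp (δ (x ⟨I, hA⟩)) := by
  have hsum : ∑ j : A, g' j.1 (x j) = ∑ j : A, g j.1 (x j) + η * δ (x ⟨I, hA⟩) := by
    rw [← sub_eq_iff_eq_add', ← sum_sub_distrib, Fintype.sum_eq_single ⟨I, hA⟩]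
    · rw [hupd]; ring
    · intro j hj
      rw [hfix j.1 fun h => hj (Subtype.ext h), sub_self]
  unfold piInd
  split_ifs
  · rw [zero_mul]
  · rw [hsum, ← Real.exp_add]
    congr 1
    field_simp
    ring

theorem piInd_update_of_not_mem {K : ℕ} {𝒳 : Fin K → Type*} (η : ℝ)
    (c : (A : Finset (Fin K)) → ((j : A) → 𝒳 j.1) → ℝ≥0∞) {g g' : (i : Fin K) → 𝒳 i → ℝ}
    {I : Fin K} (hfix : ∀ i, i ≠ I → g' i = g i) {A : Finset (Fin K)} (hA : I ∉ A)
    (x : (j : A) → 𝒳 j.1) :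
    piInd 𝒳 η c g' A x = piInd 𝒳 η c g A x := by
  unfold piInd
  rw [sum_congr rfl fun j _ => by rw [hfix j.1 fun h => hA (h ▸ j.2)]]

section Update

variable {𝒳} {η : ℝ} {c : (A : Finset (Fin K)) → ((j : A) → 𝒳 j.1) → ℝ≥0∞}
  {g g' : (i : Fin K) → 𝒳 i → ℝ} {I : Fin K}

theorem sum_piInd_update (hη : η ≠ 0) {δ : 𝒳 I → ℝ} (hupd : ∀ xI, g' I xI = g I xI + η * δ xI)
    (hfix : ∀ i, i ≠ I → g' i = g i) (A : Finset (Fin K)) :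
    ∑ x, piInd 𝒳 η c g' A x - ∑ x, piInd 𝒳 η c g A x
      = ∑ xI, marg 𝒳 A (piInd 𝒳 η c g A) I xI * (Real.exp (δ xI) - 1) := by
  by_cases hA : I ∈ A
  · rw [sum_marg_mul _ hA, ← sum_sub_distrib]
    refine sum_congr rfl fun x _ => ?_
    rw [piInd_update_of_mem hη c hupd hfix hA]
    ring
  · simp [piInd_update_of_not_mem η c hfix hA, marg, hA]

theorem dualObj_sub_dualObj_of_update (hη : η ≠ 0) (L : ℕ) (μ : (i : Fin K) → 𝒳 i → ℝ)
    {δ : 𝒳 I → ℝ} (hupd : ∀ xI, g' I xI = g I xI + η * δ xI)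
    (hfix : ∀ i, i ≠ I → g' i = g i) :
    dualObj 𝒳 η L c μ g - dualObj 𝒳 η L c μ g'
      = ∑ xI, (δ xI * μ I xI - totMarg 𝒳 L (piInd 𝒳 η c g) I xI * (Real.exp (δ xI) - 1)) := by
  have hcoupling : ∑ A ∈ SKL K L, ∑ x, piInd 𝒳 η c g' A x - ∑ A ∈ SKL K L, ∑ x, piInd 𝒳 η c g A x
      = ∑ xI, totMarg 𝒳 L (piInd 𝒳 η c g) I xI * (Real.exp (δ xI) - 1) := by
    simp only [← sum_sub_distrib, sum_piInd_update hη hupd hfix, totMarg_eq_sum_SKL, sum_mul]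
    exact sum_comm
  have hpotential : ∑ i, ∑ xi, g' i xi * μ i xi - ∑ i, ∑ xi, g i xi * μ i xi
      = η * ∑ xI, δ xI * μ I xI := by
    rw [← sum_sub_distrib, Fintype.sum_eq_single I fun i hi => by rw [hfix i hi, sub_self],
      ← sum_sub_distrib, mul_sum]
    exact sum_congr rfl fun xI _ => by rw [hupd]; ring
  unfold dualObj
  rw [sum_sub_distrib, ← hcoupling]
  field_simp
  linear_combination hpotential

theorem dualObj_sub_dualObj_of_sinkhorn_update (hη : η ≠ 0) (L : ℕ) {μ : (i : Fin K) → 𝒳 i → ℝ}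
    (hμ : ∀ xI, 0 < μ I xI) (hm : ∀ xI, 0 < totMarg 𝒳 L (piInd 𝒳 η c g) I xI)
    (hupd : ∀ xI, g' I xI = g I xI + η * Real.log (μ I xI)
      - η * Real.log (totMarg 𝒳 L (piInd 𝒳 η c g) I xI))
    (hfix : ∀ i, i ≠ I → g' i = g i) :
    dualObj 𝒳 η L c μ g - dualObj 𝒳 η L c μ g'
      = KLdiv (μ I) (totMarg 𝒳 L (piInd 𝒳 η c g) I) := by
  rw [dualObj_sub_dualObj_of_update hη L μ
    (δ := fun xI => Real.log (μ I xI) - Real.log (totMarg 𝒳 L (piInd 𝒳 η c g) I xI))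
    (fun xI => by rw [hupd]; ring) hfix, KLdiv_eq_sum]
  refine sum_congr rfl fun xI _ => ?_
  rw [Real.exp_sub, Real.exp_log (hμ xI), Real.exp_log (hm xI),
    Real.log_div (hμ xI).ne' (hm xI).ne']
  field_simp [(hm xI).ne']
  ring

end Update

theorem sq_Err_div_le {𝒳 : Fin K → Type*} [∀ i, Fintype (𝒳 i)] [∀ i, DecidableEq (𝒳 i)]
    {L : ℕ} {η : ℝ} {c : (A : Finset (Fin K)) → ((j : A) → 𝒳 j.1) → ℝ≥0∞}
    {μ : (i : Fin K) → 𝒳 i → ℝ} {g : ℕ → (i : Fin K) → 𝒳 i → ℝ} {t : ℕ} {I : Fin K}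
    (hμ : ∀ i xi, 0 < μ i xi) (hmass : ∑ i, ∑ xi, μ i xi = 1)
    (hm : ∀ i xi, 0 < totMarg 𝒳 L (piInd 𝒳 η c (g t)) i xi)
    (hmax : ∀ i, KLdiv (μ i) (totMarg 𝒳 L (piInd 𝒳 η c (g t)) i) ≤
      KLdiv (μ I) (totMarg 𝒳 L (piInd 𝒳 η c (g t)) I))
    (hsmall : ∀ i, KLdiv (μ i) (totMarg 𝒳 L (piInd 𝒳 η c (g t)) i) ≤ l1 (μ i)) :
    (Err 𝒳 η L c μ g t / K) ^ 2 ≤ 7 * KLdiv (μ I) (totMarg 𝒳 L (piInd 𝒳 η c (g t)) I) := by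
  set m := totMarg 𝒳 L (piInd 𝒳 η c (g t))
  have herr : ∀ i, l1 (fun xi => μ i xi - m i xi) ^ 2 ≤ 7 * KLdiv (μ I) (m I) := fun i => by
    have hμi : ∑ xi, μ i xi ≤ 1 := hmass ▸ single_le_sum (f := fun j => ∑ xj, μ j xj)
      (fun j _ => sum_nonneg fun xj _ => (hμ j xj).le) (mem_univ i)
    calc _ ≤ 7 * (∑ xi, μ i xi) * KLdiv (μ i) (m i) :=
          sq_l1_sub_le_of_KLdiv_le (hμ i) (hm i) (l1_eq_sum_of_pos (hμ i) ▸ hsmall i)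
      _ ≤ 7 * 1 * KLdiv (μ I) (m I) := by
          gcongr
          exacts [KLdiv_nonneg (hμ i) (hm i), hmax i]
      _ = 7 * KLdiv (μ I) (m I) := by ring
  simpa [Err] using sq_sum_div_card_le (mul_nonneg (by norm_num) (KLdiv_nonneg (hμ I) (hm I))) herr

theorem stmt9_general (K L : ℕ) (hL : 1 ≤ L)
    (𝒳 : Fin K → Type*) [∀ i, Fintype (𝒳 i)] [∀ i, DecidableEq (𝒳 i)]
    (η : ℝ) (hη : 0 < η)
    (c : (A : Finset (Fin K)) → ((j : A) → 𝒳 j.1) → ℝ≥0∞)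
    (hc : ∀ (i : Fin K) (x : (j : ({i} : Finset (Fin K))) → 𝒳 j.1), c {i} x = 0)
    (μ : (i : Fin K) → 𝒳 i → ℝ) (hμpos : ∀ i xi, 0 < μ i xi)
    (hmass : ∑ i : Fin K, ∑ xi : 𝒳 i, μ i xi = 1)
    (g : ℕ → (i : Fin K) → 𝒳 i → ℝ)
    (hg : IsGreedySinkhorn 𝒳 η L c μ g) (t : ℕ) :
    ((∀ i : Fin K,
        KLdiv (μ i) (totMarg 𝒳 L (piInd 𝒳 η c (g t)) i) ≤ l1 (μ i)) →
      dualObj 𝒳 η L c μ (g t) - dualObj 𝒳 η L c μ (g (t + 1)) ≥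
        (1 / 7) * (Err 𝒳 η L c μ g t / K) ^ 2) ∧
    ((∃ i : Fin K,
        l1 (μ i) < KLdiv (μ i) (totMarg 𝒳 L (piInd 𝒳 η c (g t)) i)) →
      dualObj 𝒳 η L c μ (g t) - dualObj 𝒳 η L c μ (g (t + 1)) ≥
        sInf {v : ℝ | ∃ j : Fin K, v = l1 (μ j)}) := by
  obtain ⟨I, hmax, hupd, hfix⟩ := hg.2 t
  set m := totMarg 𝒳 L (piInd 𝒳 η c (g t))
  have hm : ∀ i xi, 0 < m i xi := totMarg_pos hL η hc (g t)
  have hdecrease : dualObj 𝒳 η L c μ (g t) - dualObj 𝒳 η L c μ (g (t + 1)) = KLdiv (μ I) (m I) :=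
    dualObj_sub_dualObj_of_sinkhorn_update hη.ne' L (hμpos I) (hm I) hupd hfix
  refine ⟨fun hsmall => ?_, fun ⟨i, hbig⟩ => ?_⟩
  · rw [ge_iff_le, hdecrease]
    linarith [sq_Err_div_le hμpos hmass hm hmax hsmall]
  · have hbdd : BddBelow {v : ℝ | ∃ j : Fin K, v = l1 (μ j)} :=
      ⟨0, fun v ⟨j, hj⟩ => hj ▸ sum_nonneg fun xj _ => abs_nonneg _⟩
    calc sInf {v : ℝ | ∃ j : Fin K, v = l1 (μ j)} ≤ l1 (μ i) := csInf_le hbdd ⟨i, rfl⟩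
      _ ≤ KLdiv (μ i) (m i) := hbig.le
      _ ≤ KLdiv (μ I) (m I) := hmax i
      _ = _ := hdecrease.symm

/-- along the greedy Sinkhorn iteration, if at iterate `t` all the
KL-discrepancies are at most `‖μᵢ‖₁`, then
`𝒢^L(gᵗ) − 𝒢^L(g^{t+1}) ≥ (1/7)(E_t/K)²`; otherwise
`𝒢^L(gᵗ) − 𝒢^L(g^{t+1}) ≥ minⱼ ‖μⱼ‖₁`. -/
theorem stmt9 (K L : ℕ) (hK : 0 < K) (hL : 1 ≤ L) (hLK : L ≤ K)
    (𝒳 : Fin K → Type*) [∀ i, Fintype (𝒳 i)] [∀ i, DecidableEq (𝒳 i)]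
    [∀ i, Nonempty (𝒳 i)]
    (η : ℝ) (hη : 0 < η)
    (c : (A : Finset (Fin K)) → ((j : A) → 𝒳 j.1) → ℝ≥0∞)
    (hc : ∀ (i : Fin K) (x : (j : ({i} : Finset (Fin K))) → 𝒳 j.1), c {i} x = 0)
    (μ : (i : Fin K) → 𝒳 i → ℝ) (hμpos : ∀ i xi, 0 < μ i xi)
    (hmass : ∑ i : Fin K, ∑ xi : 𝒳 i, μ i xi = 1)
    (g : ℕ → (i : Fin K) → 𝒳 i → ℝ)
    (hg : IsGreedySinkhorn 𝒳 η L c μ g) (t : ℕ) :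
    ((∀ i : Fin K,
        KLdiv (μ i) (totMarg 𝒳 L (piInd 𝒳 η c (g t)) i) ≤ l1 (μ i)) →
      dualObj 𝒳 η L c μ (g t) - dualObj 𝒳 η L c μ (g (t + 1)) ≥
        (1 / 7) * (Err 𝒳 η L c μ g t / K) ^ 2) ∧
    ((∃ i : Fin K,
        l1 (μ i) < KLdiv (μ i) (totMarg 𝒳 L (piInd 𝒳 η c (g t)) i)) →
      dualObj 𝒳 η L c μ (g t) - dualObj 𝒳 η L c μ (g (t + 1)) ≥
        sInf {v : ℝ | ∃ j : Fin K, v = l1 (μ j)}) :=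
  stmt9_general K L hL 𝒳 η hη c hc μ hμpos hmass g hg t
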